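/- (Discrete Alexandroff estimate.) With Ω, v, g and the convex envelope Γ as in the context, let N ⊆ Ω be a finite set with the property that for every affine function L : ℝ^d → ℝ, if the minimum of g − L over closure(B_R) is attained at some point of Ω, then it is also attained at some point of N (this holds, in particular, when v is continuous piecewise affine with nodes N). Then sup_{closure(Ω)} v⁻ ≤ 2R ω_d^{−1/d} ( ∑_{x_i ∈ N, Γ(x_i) = g(x_i)} |∂Γ(x_i)| )^{1/d}, where |∂Γ(x_i)| denotes the d-dimensional Lebesgue measure of the subdifferential ∂Γ(x_i) and ω_d is the Lebesgue measure of the unit ball of ℝ^d. -/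

import Mathlib

open Set Metric MeasureTheory Filter
open scoped RealInnerProductSpace

noncomputable section

/-- The convex envelope `Γ(x) = sup { L(x) : L affine, L ≤ g on closedBall 0 R }`. -/
def Gam {d : ℕ} (R : ℝ) (g : EuclideanSpace ℝ (Fin d) → ℝ)
    (x : EuclideanSpace ℝ (Fin d)) : ℝ :=
  sSup {r : ℝ | ∃ (w : EuclideanSpace ℝ (Fin d)) (c : ℝ),
    (∀ z ∈ Metric.closedBall (0 : EuclideanSpace ℝ (Fin d)) R, ⟪w, z⟫ + c ≤ g z) ∧
      r = ⟪w, x⟫ + c}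

/-- The subdifferential of a function `Γ` on `closedBall 0 R` at a point `y`:
`∂Γ(y) = { w : Γ(x) ≥ Γ(y) + ⟨w, x − y⟩ for all x ∈ closedBall 0 R }`. -/
def subdiffAt {d : ℕ} (R : ℝ) (Γ : EuclideanSpace ℝ (Fin d) → ℝ)
    (y : EuclideanSpace ℝ (Fin d)) : Set (EuclideanSpace ℝ (Fin d)) :=
  { w | ∀ x ∈ Metric.closedBall (0 : EuclideanSpace ℝ (Fin d)) R,
      Γ y + ⟪w, x - y⟫ ≤ Γ x }

/-- **Discrete Alexandroff estimate.**
If every affine minimum of `g − L` attained in `Ω` is also attained at a node of `N`, then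
`sup_{closure Ω} v⁻ ≤ 2R ω_d^{−1/d} (∑_{x_i ∈ N, Γ(x_i) = g(x_i)} |∂Γ(x_i)|)^{1/d}`. -/
theorem stmt_12 (d : ℕ) (hd : 1 ≤ d) (R : ℝ) (hR : 0 < R)
    (Ω : Set (EuclideanSpace ℝ (Fin d))) (hΩo : IsOpen Ω)
    (hΩb : Bornology.IsBounded Ω)
    (hΩR : closure Ω ⊆ Metric.ball (0 : EuclideanSpace ℝ (Fin d)) R)
    (v : EuclideanSpace ℝ (Fin d) → ℝ) (hv : ContinuousOn v (closure Ω))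
    (hv_bdry : ∀ x ∈ frontier Ω, 0 ≤ v x)
    (g : EuclideanSpace ℝ (Fin d) → ℝ)
    (hg_cont : ContinuousOn g (Metric.closedBall 0 R))
    (hg₁ : ∀ x ∈ closure Ω, g x = -(max (-(v x)) 0))
    (hg₂ : ∀ x ∈ Metric.closedBall (0 : EuclideanSpace ℝ (Fin d)) R \ Ω, g x = 0)
    (N : Finset (EuclideanSpace ℝ (Fin d))) (hN : (N : Set (EuclideanSpace ℝ (Fin d))) ⊆ Ω)
    (hmin : ∀ (w : EuclideanSpace ℝ (Fin d)) (c : ℝ),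
      (∃ y ∈ Ω, ∀ x ∈ Metric.closedBall (0 : EuclideanSpace ℝ (Fin d)) R,
        g y - (⟪w, y⟫ + c) ≤ g x - (⟪w, x⟫ + c)) →
      (∃ y ∈ N, ∀ x ∈ Metric.closedBall (0 : EuclideanSpace ℝ (Fin d)) R,
        g y - (⟪w, y⟫ + c) ≤ g x - (⟪w, x⟫ + c))) :
    sSup ((fun x => max (-(v x)) 0) '' closure Ω)
      ≤ 2 * R * ((volume (Metric.ball (0 : EuclideanSpace ℝ (Fin d)) 1)).toReal)
            ^ (-(1 / (d : ℝ))) *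
        (∑ x ∈ N, if Gam R g x = g x
            then (volume (subdiffAt R (Gam R g) x)).toReal else 0) ^ (1 / (d : ℝ)) := by
  classical
  haveI : Nonempty (Fin d) := ⟨⟨0, hd⟩⟩
  have hdR : (0:ℝ) < (d:ℝ) := by exact_mod_cast Nat.lt_of_lt_of_le Nat.zero_lt_one hd
  set ω : ℝ := (volume (Metric.ball (0 : EuclideanSpace ℝ (Fin d)) 1)).toReal with hωdef
  set S : ℝ := ∑ x ∈ N, if Gam R g x = g x
      then (volume (subdiffAt R (Gam R g) x)).toReal else 0 with hSdef
  have hS0 : 0 ≤ S := Finset.sum_nonneg fun x _ => by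
    split
    · exact ENNReal.toReal_nonneg
    · exact le_rfl
  have hω0 : 0 < ω := by
    rw [hωdef]
    exact ENNReal.toReal_pos (measure_ball_pos volume 0 one_pos).ne' measure_ball_lt_top.ne
  have hRHS : 0 ≤ 2 * R * ω ^ (-(1/(d:ℝ))) * S ^ (1/(d:ℝ)) :=
    mul_nonneg (mul_nonneg (by linarith) (Real.rpow_nonneg hω0.le _)) (Real.rpow_nonneg hS0 _)
  rcases (closure Ω).eq_empty_or_nonempty with hΩe | hne
  · rw [hΩe, Set.image_empty, Real.sSup_empty]
    exact hRHS
  -- basic facts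
  have hcb : IsCompact (Metric.closedBall (0 : EuclideanSpace ℝ (Fin d)) R) :=
    isCompact_closedBall 0 R
  have hcbne : (Metric.closedBall (0 : EuclideanSpace ℝ (Fin d)) R).Nonempty :=
    ⟨0, Metric.mem_closedBall_self hR.le⟩
  have hΩcb : closure Ω ⊆ Metric.closedBall (0 : EuclideanSpace ℝ (Fin d)) R :=
    hΩR.trans Metric.ball_subset_closedBall
  have hgle : ∀ x ∈ Metric.closedBall (0 : EuclideanSpace ℝ (Fin d)) R, g x ≤ 0 := by
    intro x hx
    by_cases hxΩ : x ∈ Ω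
    · rw [hg₁ x (subset_closure hxΩ)]
      exact neg_nonpos.mpr (le_max_right _ _)
    · rw [hg₂ x ⟨hx, hxΩ⟩]
  obtain ⟨z₀, hz₀, hz₀min⟩ := hcb.exists_isMinOn hcbne hg_cont
  rw [isMinOn_iff] at hz₀min
  set m : ℝ := g z₀ with hmdef
  have hm : ∀ x ∈ Metric.closedBall (0 : EuclideanSpace ℝ (Fin d)) R, m ≤ g x := hz₀min
  have hm0 : m ≤ 0 := hgle z₀ hz₀
  -- facts about Gam
  have hbdd : ∀ x ∈ Metric.closedBall (0 : EuclideanSpace ℝ (Fin d)) R,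
      BddAbove {r : ℝ | ∃ (w : EuclideanSpace ℝ (Fin d)) (c : ℝ),
        (∀ z ∈ Metric.closedBall (0 : EuclideanSpace ℝ (Fin d)) R, ⟪w, z⟫ + c ≤ g z) ∧
        r = ⟪w, x⟫ + c} := by
    intro x hx
    exact ⟨g x, fun r ⟨w, c, hwc, hr⟩ => hr ▸ hwc x hx⟩
  have hne' : ∀ x : EuclideanSpace ℝ (Fin d),
      {r : ℝ | ∃ (w : EuclideanSpace ℝ (Fin d)) (c : ℝ),
        (∀ z ∈ Metric.closedBall (0 : EuclideanSpace ℝ (Fin d)) R, ⟪w, z⟫ + c ≤ g z) ∧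
        r = ⟪w, x⟫ + c}.Nonempty := by
    intro x
    refine ⟨m, 0, m, fun z hz => ?_, by simp⟩
    simpa using hm z hz
  have hGam_le : ∀ x ∈ Metric.closedBall (0 : EuclideanSpace ℝ (Fin d)) R,
      Gam R g x ≤ g x := by
    intro x hx
    exact csSup_le (hne' x) fun r ⟨w, c, hwc, hr⟩ => hr ▸ hwc x hx
  have hGam_ge : ∀ (w : EuclideanSpace ℝ (Fin d)) (c : ℝ),
      (∀ z ∈ Metric.closedBall (0 : EuclideanSpace ℝ (Fin d)) R, ⟪w, z⟫ + c ≤ g z) →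
      ∀ x ∈ Metric.closedBall (0 : EuclideanSpace ℝ (Fin d)) R, ⟪w, x⟫ + c ≤ Gam R g x := by
    intro w c hwc x hx
    exact le_csSup (hbdd x hx) ⟨w, c, hwc, rfl⟩
  have hGam_lb : ∀ x ∈ Metric.closedBall (0 : EuclideanSpace ℝ (Fin d)) R, m ≤ Gam R g x := by
    intro x hx
    have := hGam_ge 0 m (fun z hz => by simpa using hm z hz) x hx
    simpa using this
  -- finiteness of subdifferential measures
  have hfin : ∀ y ∈ Ω, volume (subdiffAt R (Gam R g) y) < ⊤ := by
    intro y hy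
    have hyR : ‖y‖ < R := by
      have := hΩR (subset_closure hy)
      simpa [Metric.mem_ball, dist_zero_right] using this
    have hycb : y ∈ Metric.closedBall (0 : EuclideanSpace ℝ (Fin d)) R :=
      hΩcb (subset_closure hy)
    set δ : ℝ := R - ‖y‖ with hδdef
    have hδ : 0 < δ := by simp [hδdef]; linarith
    have hsub : subdiffAt R (Gam R g) y ⊆
        Metric.closedBall (0 : EuclideanSpace ℝ (Fin d)) ((-m)/δ) := by
      intro w hw
      rw [Metric.mem_closedBall, dist_zero_right]
      rcases eq_or_ne w 0 with rfl | hw0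
      · simp only [norm_zero]
        exact div_nonneg (by linarith) hδ.le
      · have hwn : 0 < ‖w‖ := norm_pos_iff.mpr hw0
        set x : EuclideanSpace ℝ (Fin d) := y + (δ/‖w‖) • w with hxdef
        have hx : x ∈ Metric.closedBall (0 : EuclideanSpace ℝ (Fin d)) R := by
          rw [Metric.mem_closedBall, dist_zero_right, hxdef]
          calc ‖y + (δ/‖w‖) • w‖ ≤ ‖y‖ + ‖(δ/‖w‖) • w‖ := norm_add_le _ _
            _ = ‖y‖ + δ := by
                rw [norm_smul, Real.norm_eq_abs, abs_of_pos (by positivity),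
                  div_mul_cancel₀ _ hwn.ne']
            _ = R := by simp [hδdef]
        have h1 : Gam R g y + ⟪w, x - y⟫ ≤ Gam R g x := hw x hx
        have hinner : ⟪w, x - y⟫ = δ * ‖w‖ := by
          rw [hxdef]
          simp only [add_sub_cancel_left]
          rw [real_inner_smul_right, real_inner_self_eq_norm_sq]
          field_simp
        have h2 : Gam R g x ≤ 0 := (hGam_le x hx).trans (hgle x hx)
        have h3 : m ≤ Gam R g y := hGam_lb y hycb
        rw [hinner] at h1
        rw [le_div_iff₀ hδ]
        nlinarith
    exact lt_of_le_of_lt (measure_mono hsub) measure_closedBall_lt_top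
  -- the supremum is attained
  have hK : IsCompact (closure Ω) := hΩb.isCompact_closure
  have hcf : ContinuousOn (fun x => max (-(v x)) 0) (closure Ω) :=
    (hv.neg).sup continuousOn_const
  have himc : IsCompact ((fun x => max (-(v x)) 0) '' closure Ω) := hK.image_of_continuousOn hcf
  set M : ℝ := sSup ((fun x => max (-(v x)) 0) '' closure Ω) with hMdef
  obtain ⟨x₀, hx₀, hx₀M⟩ := himc.sSup_mem (hne.image _)
  by_cases hMpos : M ≤ 0
  · exact hMpos.trans hRHS
  push_neg at hMpos
  have hgx₀ : g x₀ = -M := by rw [hg₁ x₀ hx₀, show max (-(v x₀)) 0 = M from hx₀M]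
  have hx₀cb : x₀ ∈ Metric.closedBall (0 : EuclideanSpace ℝ (Fin d)) R := hΩcb hx₀
  have hx₀R : ‖x₀‖ ≤ R := by
    simpa [Metric.mem_closedBall, dist_zero_right] using hx₀cb
  set r : ℝ := M / (2*R) with hrdef
  have hr : 0 < r := by positivity
  -- inclusion of the ball in the union of subdifferentials
  have hincl : Metric.ball (0 : EuclideanSpace ℝ (Fin d)) r ⊆
      ⋃ y ∈ N, (if Gam R g y = g y then subdiffAt R (Gam R g) y else ∅) := by
    intro p hp
    have hpn : ‖p‖ < r := by simpa [Metric.mem_ball, dist_zero_right] using hp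
    have hpR : ‖p‖ * (2*R) < M := by
      rw [hrdef, lt_div_iff₀ (by positivity)] at hpn
      exact hpn
    obtain ⟨y, hycb, hymin⟩ := hcb.exists_isMinOn (f := fun x => g x - ⟪p, x⟫) hcbne
      (hg_cont.sub (Continuous.continuousOn (continuous_const.inner continuous_id)))
    rw [isMinOn_iff] at hymin
    have hyΩ : y ∈ Ω := by
      by_contra hyΩ
      have hgy : g y = 0 := hg₂ y ⟨hycb, hyΩ⟩
      have h1 : g y - ⟪p, y⟫ ≤ g x₀ - ⟪p, x₀⟫ := hymin x₀ hx₀cb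
      have hyR : ‖y‖ ≤ R := by simpa [Metric.mem_closedBall, dist_zero_right] using hycb
      have h2 : |⟪p, x₀⟫| ≤ ‖p‖ * R := (abs_real_inner_le_norm p x₀).trans
        (mul_le_mul_of_nonneg_left hx₀R (norm_nonneg p))
      have h3 : |⟪p, y⟫| ≤ ‖p‖ * R := (abs_real_inner_le_norm p y).trans
        (mul_le_mul_of_nonneg_left hyR (norm_nonneg p))
      rw [hgy, hgx₀] at h1
      rw [abs_le] at h2 h3
      have := h2.1
      have := h3.2
      nlinarith
    obtain ⟨y', hy'N, hy'min⟩ := hmin p 0 ⟨y, hyΩ, fun x hx => by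
      have := hymin x hx; simpa using this⟩
    have hy'cb : y' ∈ Metric.closedBall (0 : EuclideanSpace ℝ (Fin d)) R :=
      hΩcb (subset_closure (hN hy'N))
    have hadm : ∀ z ∈ Metric.closedBall (0 : EuclideanSpace ℝ (Fin d)) R,
        ⟪p, z⟫ + (g y' - ⟪p, y'⟫) ≤ g z := by
      intro z hz
      have := hy'min z hz
      linarith
    have hΓy' : Gam R g y' = g y' := by
      refine le_antisymm (hGam_le y' hy'cb) ?_
      have := hGam_ge p (g y' - ⟪p, y'⟫) hadm y' hy'cb
      linarith
    have hpsub : p ∈ subdiffAt R (Gam R g) y' := by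
      intro x hx
      have h1 : ⟪p, x⟫ + (g y' - ⟪p, y'⟫) ≤ Gam R g x := hGam_ge p _ hadm x hx
      rw [hΓy', inner_sub_right]
      linarith
    refine Set.mem_biUnion hy'N ?_
    rw [if_pos hΓy']
    exact hpsub
  -- measure estimate
  have h5 : volume (Metric.ball (0 : EuclideanSpace ℝ (Fin d)) r) ≤
      ∑ x ∈ N, volume (if Gam R g x = g x then subdiffAt R (Gam R g) x else ∅) :=
    (measure_mono hincl).trans (measure_biUnion_finset_le N _)
  have h7 : ∀ x ∈ N, volume (if Gam R g x = g x then subdiffAt R (Gam R g) x else ∅)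
      = (if Gam R g x = g x then volume (subdiffAt R (Gam R g) x) else 0) := by
    intro x hx
    split <;> simp
  rw [Finset.sum_congr rfl h7] at h5
  have hfin' : ∀ x ∈ N,
      (if Gam R g x = g x then volume (subdiffAt R (Gam R g) x) else 0) ≠ ⊤ := by
    intro x hx
    split
    · exact (hfin x (hN hx)).ne
    · exact ENNReal.zero_ne_top
  have h8 : (volume (Metric.ball (0 : EuclideanSpace ℝ (Fin d)) r)).toReal ≤ S := by
    have hst : ∑ x ∈ N, (if Gam R g x = g x then volume (subdiffAt R (Gam R g) x) else 0) ≠ ⊤ :=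
      (ENNReal.sum_lt_top.mpr fun x hx => lt_top_iff_ne_top.mpr (hfin' x hx)).ne
    have := ENNReal.toReal_mono hst h5
    rw [ENNReal.toReal_sum hfin'] at this
    refine this.trans_eq ?_
    rw [hSdef]
    refine Finset.sum_congr rfl fun x hx => ?_
    split <;> simp
  have hvol : (volume (Metric.ball (0 : EuclideanSpace ℝ (Fin d)) r)).toReal = r ^ d * ω := by
    rw [Measure.addHaar_ball _ _ hr.le, ENNReal.toReal_mul, ENNReal.toReal_ofReal (by positivity),
      finrank_euclideanSpace_fin, hωdef]
  rw [hvol] at h8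
  -- final algebra
  have h10 : r ^ ((d:ℝ)) ≤ S / ω := by
    rw [Real.rpow_natCast, le_div_iff₀ hω0]
    exact h8
  have h11 : r ≤ (S / ω) ^ (1/(d:ℝ)) := by
    have h := Real.rpow_le_rpow (Real.rpow_nonneg hr.le _) h10 (by positivity : (0:ℝ) ≤ 1/(d:ℝ))
    rwa [← Real.rpow_mul hr.le, mul_one_div, div_self hdR.ne', Real.rpow_one] at h
  have h12 : (S / ω) ^ (1/(d:ℝ)) = ω ^ (-(1/(d:ℝ))) * S ^ (1/(d:ℝ)) := by
    rw [div_eq_mul_inv, Real.mul_rpow hS0 (inv_nonneg.mpr hω0.le), Real.inv_rpow hω0.le,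
      ← Real.rpow_neg hω0.le, mul_comm]
  rw [h12] at h11
  rw [hrdef, div_le_iff₀ (by positivity : (0:ℝ) < 2*R)] at h11
  calc M ≤ ω ^ (-(1/(d:ℝ))) * S ^ (1/(d:ℝ)) * (2*R) := h11
    _ = 2 * R * ω ^ (-(1/(d:ℝ))) * S ^ (1/(d:ℝ)) := by ring

end
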